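/- arXiv:1310.5773 — 2 statements merged into one kernel-verified Lean document; each statement's English description precedes it below -/
import Mathlib

section
/- There exists a periodic Golay pair of length 122. -/
/-!
Take the supplementary difference set `X, Y ⊆ ℤ/122` with parameters `(122; 56, 55; 50)`
and let `A, B` be the `±1` sequences equal to `-1` exactly on `X`, resp. `Y`. Expanding
`a_i a_{i+s} = (1 - 2[i ∈ X])(1 - 2[i + s ∈ X])` gives `PAF_A(s) = v - 4|X| + 4λ_X(s)`, where
`λ_X(s)` counts the pairs of `X` with difference `s`; summing over both blocks,
`PAF_A(s) + PAF_B(s) = 2v - 4(k₁ + k₂ - λ) = 244 - 244 = 0`.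

The blocks are unions of orbits of `H = ⟨9⟩ ≤ (ℤ/122)ˣ`, so the difference counts are constant
on `H`-orbits and the SDS property only has to be checked on one representative of each of the 25
nonzero orbits.
-/

open Finset

/-- Zero-extension of a sequence indexed by `ZMod v` to all of `ℤ`,
with `a_i = 0` for `i` outside `[0, v-1]`. -/
def zext (v : ℕ) (A : ZMod v → ℤ) (n : ℤ) : ℤ :=
  if 0 ≤ n ∧ n < (v : ℤ) then A (n : ZMod v) else 0

/-- Nonperiodic autocorrelation function `NAF_A(s) = Σ_{i∈ℤ} a_i a_{i+s}`. -/
def naf (v : ℕ) (A : ZMod v → ℤ) (s : ℤ) : ℤ :=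
  ∑ i ∈ Finset.range v, zext v A i * zext v A (i + s)

/-- Periodic autocorrelation function `PAF_A(s) = Σ_{i∈Z_v} a_i a_{i+s}`. -/
def paf (v : ℕ) (A : ZMod v → ℤ) (s : ZMod v) : ℤ :=
  ∑ i ∈ Finset.range v, A i * A ((i : ZMod v) + s)

/-- Number of ordered pairs `(a,b)` with `a - b = c` and both `a,b` in `X`,
or both in `Y` (counted with multiplicity over the two blocks). -/
def sdsCount (v : ℕ) (X Y : Finset (ZMod v)) (c : ZMod v) : ℕ :=
  ((X ×ˢ X).filter fun p => p.1 - p.2 = c).card +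
  ((Y ×ˢ Y).filter fun p => p.1 - p.2 = c).card

open scoped Pointwise

section DiffCount

variable {G : Type*} [AddCommGroup G] [DecidableEq G]

def diffCount (X : Finset G) (c : G) : ℕ :=
  #{p ∈ X ×ˢ X | p.1 - p.2 = c}

theorem diffCount_eq_card_filter (X : Finset G) (c : G) :
    diffCount X c = #{i ∈ X | i + c ∈ X} :=
  card_nbij' Prod.snd (fun i => (i + c, i))
    (fun p hp => by simp_all [← (mem_filter.1 hp).2])
    (fun i hi => by simp_all)
    (fun p hp => by simp_all [← (mem_filter.1 hp).2])
    (fun _ _ => rfl)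

theorem diffCount_smul {Γ : Type*} [Group Γ] [DistribMulAction Γ G] {X : Finset G} {g : Γ}
    (hX : g • X = X) (c : G) : diffCount X (g • c) = diffCount X c := by
  have hmem : ∀ i, g • i ∈ X ↔ i ∈ X := fun i => by
    conv_lhs => rw [← hX]
    exact smul_mem_smul_finset_iff g
  rw [diffCount_eq_card_filter, diffCount_eq_card_filter]
  refine (card_nbij' (g • ·) (g⁻¹ • ·) ?_ ?_ (fun i _ => by simp) (fun i _ => by simp)).symm
  · intro i hi
    simp_all [← smul_add]
  · intro i hi
    simp only [coe_filter, Set.mem_ofPred_eq] at hi ⊢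
    rwa [← hmem (g⁻¹ • i), ← hmem (g⁻¹ • i + c), smul_add, smul_inv_smul]

end DiffCount

section SignSequence

variable {α : Type*} [DecidableEq α]

def signSeq (X : Finset α) (i : α) : ℤ :=
  if i ∈ X then -1 else 1

theorem signSeq_eq_one_or_neg_one (X : Finset α) (i : α) :
    signSeq X i = 1 ∨ signSeq X i = -1 := by
  unfold signSeq
  split_ifs <;> simp

theorem sum_signSeq_mul_signSeq_add {G : Type*} [AddCommGroup G] [Fintype G] [DecidableEq G]
    (X : Finset G) (s : G) :
    ∑ i, signSeq X i * signSeq X (i + s) = Fintype.card G - 4 * #X + 4 * diffCount X s := by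
  have expand : ∀ i, signSeq X i * signSeq X (i + s) =
      1 - 2 * (if i ∈ X then 1 else 0) - 2 * (if i + s ∈ X then 1 else 0)
        + 4 * (if i ∈ X ∧ i + s ∈ X then 1 else 0) := by
    intro i
    unfold signSeq
    split_ifs <;> simp_all
  have shift : ∑ i, (if i + s ∈ X then (1 : ℤ) else 0) = ∑ i, if i ∈ X then 1 else 0 :=
    Fintype.sum_equiv (Equiv.addRight s) _ _ fun _ => rfl
  simp only [expand, sum_add_distrib, sum_sub_distrib, ← mul_sum, shift, sum_boole, sum_const,
    card_univ, ← filter_filter, filter_univ_mem, diffCount_eq_card_filter, nsmul_one]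
  ring

end SignSequence

theorem paf_eq_sum {v : ℕ} [NeZero v] (A : ZMod v → ℤ) (s : ZMod v) :
    paf v A s = ∑ i : ZMod v, A i * A (i + s) :=
  sum_nbij' (fun i => (i : ZMod v)) ZMod.val (fun _ _ => mem_univ _)
    (fun i _ => mem_range.2 (ZMod.val_lt i)) (fun _ hi => ZMod.val_cast_of_lt (mem_range.1 hi))
    (fun i _ => ZMod.natCast_zmod_val i) fun _ _ => rfl

def IsSuppDiffSet (v : ℕ) (X Y : Finset (ZMod v)) (l : ℕ) : Prop :=
  ∀ c ≠ 0, sdsCount v X Y c = l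

theorem IsSuppDiffSet.paf_signSeq_add_paf_signSeq_eq_zero {v : ℕ} [NeZero v]
    {X Y : Finset (ZMod v)} {l : ℕ} (hXY : IsSuppDiffSet v X Y l)
    (hv : (v : ℤ) = 2 * (#X + #Y - l)) {s : ZMod v} (hs : s ≠ 0) :
    paf v (signSeq X) s + paf v (signSeq Y) s = 0 := by
  have hcount : diffCount X s + diffCount Y s = l := hXY s hs
  rw [paf_eq_sum, paf_eq_sum, sum_signSeq_mul_signSeq_add, sum_signSeq_mul_signSeq_add, ZMod.card]
  rw [← hcount] at hv
  push_cast at hv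
  linarith

theorem sdsCount_smul {v : ℕ} {X Y : Finset (ZMod v)} {u : (ZMod v)ˣ} (hX : u • X = X)
    (hY : u • Y = Y) (c : ZMod v) : sdsCount v X Y (u • c) = sdsCount v X Y c :=
  congrArg₂ (· + ·) (diffCount_smul hX c) (diffCount_smul hY c)

def H122 : Finset (ZMod 122) := {1, 9, 81, 95, 119}

def X122 : Finset (ZMod 122) := {1, 3, 6, 8, 10, 13, 16, 21, 23, 25, 52, 61} * H122

def Y122 : Finset (ZMod 122) := {3, 4, 6, 7, 13, 19, 24, 25, 46, 51, 52} * H122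

def unit9 : (ZMod 122)ˣ := ZMod.unitOfCoprime 9 (by norm_num)

def orbitReps122 : Finset (ZMod 122) :=
  {1, 2, 3, 4, 5, 6, 7, 8, 10, 11, 12, 13, 16, 17, 19, 20, 21, 23, 24, 25, 26, 46, 51, 52, 61}

theorem isSuppDiffSet_X122_Y122 : IsSuppDiffSet 122 X122 Y122 50 := by
  have hX : unit9 ∈ MulAction.stabilizer _ X122 := by decide +kernel
  have hY : unit9 ∈ MulAction.stabilizer _ Y122 := by decide +kernel
  have horbits :
      ∀ c : ZMod 122, c ≠ 0 → ∃ r ∈ orbitReps122, ∃ k < 5, (unit9 ^ k) • r = c := by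
    decide +kernel
  have hreps : ∀ r ∈ orbitReps122, sdsCount 122 X122 Y122 r = 50 := by decide +kernel
  intro c hc
  obtain ⟨r, hr, k, -, rfl⟩ := horbits c hc
  rw [sdsCount_smul (pow_mem hX k) (pow_mem hY k), hreps r hr]

theorem periodic_golay_pair_length_122 :
    ∃ A B : ZMod 122 → ℤ,
      (∀ i, A i = 1 ∨ A i = -1) ∧ (∀ i, B i = 1 ∨ B i = -1) ∧
      ∀ s : ZMod 122, s ≠ 0 → paf 122 A s + paf 122 B s = 0 := by
  have hcard : #X122 = 56 ∧ #Y122 = 55 := by decide +kernel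
  refine ⟨signSeq X122, signSeq Y122, signSeq_eq_one_or_neg_one _, signSeq_eq_one_or_neg_one _,
    fun s hs => isSuppDiffSet_X122_Y122.paf_signSeq_add_paf_signSeq_eq_zero ?_ hs⟩
  rw [hcard.1, hcard.2]
  norm_num
end

section
/- If a Golay number g and a periodic Golay number v exist, then there exists a Hadamard matrix of order 2gv. -/
open Finset

/-!
Split the Golay pair into `a = (A + B)/2` and `b = (A - B)/2`: these are `{0, ±1}`-sequences with
complementary supports, and `A A* + B B* = 2g` in `ℤ[ℤ]` becomes `a a* + b b* = g`, where
`x*` substitutes `t ↦ t⁻¹`. In the group ring of `ℤ_g × ℤ_v` put `E = a C + b D*` and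
`F = a D - b C*`, with the periodic pair `(C, D)` on the second factor. Then
`E E* + F F* = (a a* + b b*)(C C* + D D*) = g · 2v`, and `E`, `F` are `±1`-sequences because every
element of `ℤ_g × ℤ_v` is uniquely `x + y` and exactly one of `a x`, `b x` is nonzero. So `(E, F)`
is a periodic complementary pair of length `gv`, and the circulant block matrix
`[[E, F], [Fᵀ, -Eᵀ]]` is Hadamard of order `2gv`.
-/

open scoped AddMonoidAlgebra Matrix

lemma ZMod.sum_range_natCast {M : Type*} [AddCommMonoid M] {n : ℕ} [NeZero n] (f : ZMod n → M) :
    ∑ i ∈ range n, f i = ∑ x, f x :=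
  sum_nbij' (↑) ZMod.val (by simp) (fun x _ => mem_range.2 x.val_lt)
    (fun _ hi => ZMod.val_cast_of_lt (mem_range.1 hi)) (fun x _ => ZMod.natCast_zmod_val x)
    (fun _ _ => rfl)

namespace AddMonoidAlgebra

variable {R G K L : Type*} [CommSemiring R]

noncomputable def ofFun [Fintype G] (P : G → R) : R[G] := ∑ g, single g (P g)

@[simp]
lemma coe_coeff_ofFun [Fintype G] (P : G → R) : ⇑(ofFun P).coeff = P := by
  classical
  ext g
  simp [ofFun, coeff_sum, Finsupp.single_apply]

variable [AddCommGroup G] [AddCommGroup K] [AddCommGroup L]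

noncomputable def invert : R[G] ≃ₐ[R] R[G] := domCongr R R (AddEquiv.neg G)

@[simp]
lemma invert_single (g : G) (r : R) : invert (single g r) = single (-g) r :=
  domCongr_single ..

@[simp]
lemma coeff_invert (x : R[G]) (g : G) : (invert x).coeff g = x.coeff (-g) := by
  simp [invert, coeff_domCongr]

@[simp]
lemma invert_invert (x : R[G]) : invert (invert x) = x := by
  ext; simp

lemma invert_mapDomainRingHom (f : G →+ K) (x : R[G]) :
    invert (mapDomainRingHom R f x) = mapDomainRingHom R f (invert x) := by
  induction x using induction_linear with
  | zero => simp
  | add x y hx hy => simp only [map_add, hx, hy]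
  | single g r => simp

lemma coeff_mul_eq_sum [Fintype G] (x y : R[G]) (g : G) :
    (x * y).coeff g = ∑ h, x.coeff (g - h) * y.coeff h := by
  classical
  rw [coeff_mul_apply_right, Finsupp.sum_fintype _ _ (by simp)]
  simp [sub_eq_add_neg]

lemma invert_ofFun [Fintype G] (P : G → R) : invert (ofFun P) = ofFun fun g => P (-g) := by
  ext; simp

lemma mapDomainRingHom_inl_ofFun_mul_inr_ofFun [Fintype K] [Fintype L] (P : K → R) (Q : L → R) :
    mapDomainRingHom R (AddMonoidHom.inl K L) (ofFun P) *
        mapDomainRingHom R (AddMonoidHom.inr K L) (ofFun Q) =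
      ofFun fun z => P z.1 * Q z.2 := by
  simp only [ofFun, map_sum, mapDomainRingHom_apply, mapDomain_single, sum_mul_sum,
    single_mul_single, Fintype.sum_prod_type]
  simp

lemma circulant_coeff_mul [Fintype G] (x y : R[G]) :
    Matrix.circulant ⇑(x * y).coeff = Matrix.circulant ⇑x.coeff * Matrix.circulant ⇑y.coeff := by
  ext i j
  simp only [Matrix.circulant_apply, Matrix.mul_apply, coeff_mul_eq_sum]
  refine Fintype.sum_equiv (Equiv.addRight j) _ _ fun h => ?_
  simp [sub_sub, add_comm]

lemma circulant_coeff_invert (x : R[G]) :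
    Matrix.circulant ⇑(invert x).coeff = (Matrix.circulant ⇑x.coeff)ᵀ := by
  ext i j
  simp

lemma circulant_coeff_single_zero [Fintype G] [DecidableEq G] (r : R) :
    Matrix.circulant ⇑(single (0 : G) r).coeff = r • 1 := by
  rw [coeff_single, Finsupp.single_eq_pi_single, Matrix.circulant_single,
    Matrix.smul_one_eq_diagonal]
  rfl

end AddMonoidAlgebra

namespace Matrix

variable {G : Type*} [AddCommGroup G] [Fintype G] [DecidableEq G]

lemma isHadamard_fromBlocks_circulant {E F : G → ℤ}
    (hE : ∀ g, E g = 1 ∨ E g = -1) (hF : ∀ g, F g = 1 ∨ F g = -1)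
    (hEF : circulant E * (circulant E)ᵀ + circulant F * (circulant F)ᵀ =
      (2 * Fintype.card G : ℤ) • 1) :
    (fromBlocks (circulant E) (circulant F) (circulant F)ᵀ (-(circulant E)ᵀ)).IsHadamard := by
  set X := circulant E
  set Y := circulant F
  have hXY : X * Y = Y * X := circulant_mul_comm E F
  have hXX : Xᵀ * X = X * Xᵀ := by
    rw [transpose_circulant]; exact circulant_mul_comm _ _
  have hYY : Yᵀ * Y = Y * Yᵀ := by
    rw [transpose_circulant]; exact circulant_mul_comm _ _
  have hXYt : Yᵀ * Xᵀ = Xᵀ * Yᵀ := by rw [← transpose_mul, hXY, transpose_mul]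
  refine IsHadamard.of_mul_conjTranspose (fun i j => ?_) ?_ ?_
  · rw [Unitary.mem_iff_eq_one_or_eq_neg_one]
    rcases i with i | i <;> rcases j with j | j
    · exact hE _
    · exact hF _
    · exact hF _
    · simpa [X, or_comm, neg_eq_iff_eq_neg] using hE (j - i)
  · have hcard : (Fintype.card (G ⊕ G) : ℤ) = 2 * Fintype.card G := by
      rw [Fintype.card_sum]; push_cast; ring
    rw [conjTranspose_eq_transpose_of_trivial, fromBlocks_transpose, fromBlocks_multiply, hcard,
      ← fromBlocks_one, fromBlocks_smul, ← hEF]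
    simp only [transpose_transpose, transpose_neg, mul_neg, neg_mul, hXY, hXYt, hXX, hYY,
      smul_zero, add_neg_cancel, neg_neg, add_comm (Y * Yᵀ)]
  · exact IsRegular.of_ne_zero (by positivity)

end Matrix

open AddMonoidAlgebra

def IsGolayPair (m : ℕ) (A B : ZMod m → ℤ) : Prop :=
  (∀ i, A i = 1 ∨ A i = -1) ∧ (∀ i, B i = 1 ∨ B i = -1) ∧
    ∀ s : ℤ, s ≠ 0 → naf m A s + naf m B s = 0

def IsPeriodicGolayPair (v : ℕ) (C D : ZMod v → ℤ) : Prop :=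
  (∀ i, C i = 1 ∨ C i = -1) ∧ (∀ i, D i = 1 ∨ D i = -1) ∧
    ∀ s : ZMod v, s ≠ 0 → paf v C s + paf v D s = 0

section Aperiodic

variable {m : ℕ}

noncomputable def hallPoly (P : ZMod m → ℤ) : ℤ[ℤ] := ∑ i ∈ range m, single (i : ℤ) (P i)

lemma hallPoly_add (P Q : ZMod m → ℤ) : hallPoly (P + Q) = hallPoly P + hallPoly Q := by
  simp [hallPoly, single_add, sum_add_distrib]

lemma hallPoly_sub (P Q : ZMod m → ℤ) : hallPoly (P - Q) = hallPoly P - hallPoly Q := by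
  simp [hallPoly, single_sub, sum_sub_distrib]

lemma zext_natCast (P : ZMod m → ℤ) {i : ℕ} (hi : i < m) : zext m P i = P i := by
  simp [zext, hi]

lemma coeff_hallPoly (P : ZMod m → ℤ) (n : ℤ) : (hallPoly P).coeff n = zext m P n := by
  classical
  simp only [hallPoly, coeff_sum, Finsupp.finsetSum_apply, coeff_single, Finsupp.single_apply]
  by_cases hn : 0 ≤ n ∧ n < m
  · lift n to ℕ using hn.1
    have hnm : n < m := by exact_mod_cast hn.2
    rw [zext_natCast P hnm]
    simp [hnm]
  · rw [zext, if_neg hn]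
    refine sum_eq_zero fun i hi => if_neg ?_
    have := mem_range.1 hi
    omega

lemma coeff_hallPoly_mul_invert (P : ZMod m → ℤ) (d : ℤ) :
    (hallPoly P * invert (hallPoly P)).coeff d = naf m P d := by
  nth_rewrite 2 [hallPoly]
  simp only [map_sum, invert_single, mul_sum, coeff_sum, Finsupp.finsetSum_apply,
    coeff_mul_single_apply, coeff_hallPoly, naf]
  refine sum_congr rfl fun i hi => ?_
  rw [zext_natCast P (mem_range.1 hi), neg_neg, add_comm, mul_comm]

lemma naf_zero {P : ZMod m → ℤ} (hP : ∀ i, P i = 1 ∨ P i = -1) : naf m P 0 = m := by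
  have hsq : ∀ i ∈ range m, zext m P i * zext m P (i + 0) = 1 := fun i hi => by
    rw [add_zero, zext_natCast P (mem_range.1 hi)]
    rcases hP i with h | h <;> simp [h]
  rw [naf, sum_congr rfl hsq, sum_const, card_range, nsmul_one]

lemma IsGolayPair.hallPoly_mul_invert_add {A B : ZMod m → ℤ} (h : IsGolayPair m A B) :
    hallPoly A * invert (hallPoly A) + hallPoly B * invert (hallPoly B) = single 0 (2 * m : ℤ) := by
  obtain ⟨hA, hB, hAB⟩ := h
  ext d
  simp only [coeff_add, Finsupp.add_apply, coeff_hallPoly_mul_invert, coeff_single,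
    Finsupp.single_apply]
  rcases eq_or_ne d 0 with rfl | hd
  · simp [naf_zero hA, naf_zero hB, two_mul]
  · simp [hAB d hd, Ne.symm hd]

lemma hallPoly_mul_invert_add_of_isGolayPair_add_sub {a b : ZMod m → ℤ}
    (h : IsGolayPair m (a + b) (a - b)) :
    hallPoly a * invert (hallPoly a) + hallPoly b * invert (hallPoly b) = single 0 (m : ℤ) := by
  have h2 : (2 : ℤ) • (hallPoly a * invert (hallPoly a) + hallPoly b * invert (hallPoly b)) =
      (2 : ℤ) • single 0 (m : ℤ) := by
    rw [smul_single, smul_eq_mul, ← h.hallPoly_mul_invert_add, hallPoly_add, hallPoly_sub,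
      map_add, map_sub, two_smul]
    ring
  ext d
  have h2d := congr_arg (fun x => x.coeff d) h2
  simp only [coeff_smul_apply, smul_eq_mul] at h2d
  exact mul_left_cancel₀ two_ne_zero h2d

lemma mapDomainRingHom_intCast_hallPoly [NeZero m] (P : ZMod m → ℤ) :
    mapDomainRingHom ℤ (Int.castAddHom (ZMod m)) (hallPoly P) = ofFun P := by
  simp only [hallPoly, ofFun, map_sum, mapDomainRingHom_apply, mapDomain_single,
    Int.coe_castAddHom, Int.cast_natCast]
  exact ZMod.sum_range_natCast fun x => single x (P x)

lemma ofFun_mul_invert_add_of_isGolayPair_add_sub [NeZero m] {a b : ZMod m → ℤ}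
    (h : IsGolayPair m (a + b) (a - b)) :
    ofFun a * invert (ofFun a) + ofFun b * invert (ofFun b) = single 0 (m : ℤ) := by
  have h' := congr_arg (mapDomainRingHom ℤ (Int.castAddHom (ZMod m)))
    (hallPoly_mul_invert_add_of_isGolayPair_add_sub h)
  rwa [map_add, map_mul, map_mul, ← invert_mapDomainRingHom, ← invert_mapDomainRingHom,
    mapDomainRingHom_intCast_hallPoly, mapDomainRingHom_intCast_hallPoly, mapDomainRingHom_apply,
    mapDomain_single, map_zero] at h'

end Aperiodic

section Periodic

variable {v : ℕ}

lemma paf_zero {C : ZMod v → ℤ} (hC : ∀ i, C i = 1 ∨ C i = -1) : paf v C 0 = v := by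
  have hsq : ∀ i ∈ range v, C i * C ((i : ZMod v) + 0) = 1 := fun i _ => by
    rcases hC i with h | h <;> simp [h]
  rw [paf, sum_congr rfl hsq, sum_const, card_range, nsmul_one]

variable [NeZero v]

lemma coeff_ofFun_mul_invert (C : ZMod v → ℤ) (s : ZMod v) :
    (ofFun C * invert (ofFun C)).coeff s = paf v C s := by
  rw [coeff_mul_eq_sum, paf, ZMod.sum_range_natCast (fun x => C x * C (x + s))]
  refine Fintype.sum_equiv (Equiv.neg _) _ _ fun h => ?_
  simp [mul_comm, sub_eq_neg_add]

lemma IsPeriodicGolayPair.ofFun_mul_invert_add {C D : ZMod v → ℤ}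
    (h : IsPeriodicGolayPair v C D) :
    ofFun C * invert (ofFun C) + ofFun D * invert (ofFun D) = single 0 (2 * v : ℤ) := by
  obtain ⟨hC, hD, hCD⟩ := h
  ext s
  simp only [coeff_add, Finsupp.add_apply, coeff_ofFun_mul_invert, coeff_single,
    Finsupp.single_apply]
  rcases eq_or_ne s 0 with rfl | hs
  · simp [paf_zero hC, paf_zero hD, two_mul]
  · simp [hCD s hs, Ne.symm hs]

end Periodic

section Product

variable {R K L : Type*} [CommRing R] [AddCommGroup K] [AddCommGroup L] [Fintype K] [Fintype L]

def golayProduct (a b : K → R) (C D : L → R) (z : K × L) : R :=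
  a z.1 * C z.2 + b z.1 * D (-z.2)

local notation "ι₁" => mapDomainRingHom R (AddMonoidHom.inl K L)
local notation "ι₂" => mapDomainRingHom R (AddMonoidHom.inr K L)

lemma ofFun_golayProduct (a b : K → R) (C D : L → R) :
    ofFun (golayProduct a b C D) =
      ι₁ (ofFun a) * ι₂ (ofFun C) + ι₁ (ofFun b) * ι₂ (invert (ofFun D)) := by
  rw [invert_ofFun, mapDomainRingHom_inl_ofFun_mul_inr_ofFun,
    mapDomainRingHom_inl_ofFun_mul_inr_ofFun]
  ext z
  simp [golayProduct]

lemma ofFun_golayProduct_mul_invert_add {a b : K → R} {C D : L → R} {r s : R}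
    (hab : ofFun a * invert (ofFun a) + ofFun b * invert (ofFun b) = single 0 r)
    (hCD : ofFun C * invert (ofFun C) + ofFun D * invert (ofFun D) = single 0 s) :
    ofFun (golayProduct a b C D) * invert (ofFun (golayProduct a b C D)) +
        ofFun (golayProduct a b D (-C)) * invert (ofFun (golayProduct a b D (-C))) =
      single 0 (r * s) := by
  have hab' : ι₁ (ofFun a) * ι₁ (invert (ofFun a)) + ι₁ (ofFun b) * ι₁ (invert (ofFun b)) =
      single 0 r := by
    rw [← map_mul, ← map_mul, ← map_add, hab]; simp [Prod.zero_eq_mk]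
  have hCD' : ι₂ (ofFun C) * ι₂ (invert (ofFun C)) + ι₂ (ofFun D) * ι₂ (invert (ofFun D)) =
      single 0 s := by
    rw [← map_mul, ← map_mul, ← map_add, hCD]; simp [Prod.zero_eq_mk]
  have hneg : ofFun (-C) = -ofFun C := by ext; simp
  rw [ofFun_golayProduct, ofFun_golayProduct, hneg, ← zero_add (0 : K × L), ← single_mul_single]
  simp only [map_neg, map_add, map_mul, invert_invert, invert_mapDomainRingHom]
  linear_combination
    (ι₂ (ofFun C) * ι₂ (invert (ofFun C)) + ι₂ (ofFun D) * ι₂ (invert (ofFun D))) * hab' +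
      single 0 r * hCD'

end Product

lemma golayProduct_halves_eq_one_or_eq_neg_one {K L : Type*} [AddCommGroup L]
    {A B : K → ℤ} {C D : L → ℤ}
    (hA : ∀ i, A i = 1 ∨ A i = -1) (hB : ∀ i, B i = 1 ∨ B i = -1)
    (hC : ∀ j, C j = 1 ∨ C j = -1) (hD : ∀ j, D j = 1 ∨ D j = -1) (z : K × L) :
    golayProduct (fun i => (A i + B i) / 2) (fun i => (A i - B i) / 2) C D z = 1 ∨
      golayProduct (fun i => (A i + B i) / 2) (fun i => (A i - B i) / 2) C D z = -1 := by
  rcases hA z.1 with h₁ | h₁ <;> rcases hB z.1 with h₂ | h₂ <;> rcases hC z.2 with h₃ | h₃ <;>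
    rcases hD (-z.2) with h₄ | h₄ <;> simp [golayProduct, h₁, h₂, h₃, h₄]

theorem exists_isHadamard_of_isGolayPair_of_isPeriodicGolayPair {g v : ℕ} [NeZero g] [NeZero v]
    {A B : ZMod g → ℤ} {C D : ZMod v → ℤ} (hAB : IsGolayPair g A B)
    (hCD : IsPeriodicGolayPair v C D) :
    ∃ H : Matrix (Fin (2 * g * v)) (Fin (2 * g * v)) ℤ, H.IsHadamard := by
  set a : ZMod g → ℤ := fun i => (A i + B i) / 2
  set b : ZMod g → ℤ := fun i => (A i - B i) / 2
  have hab : IsGolayPair g (a + b) (a - b) := by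
    convert hAB <;> ext i <;> rcases hAB.1 i with h | h <;> rcases hAB.2.1 i with h' | h' <;>
      simp [a, b, h, h']
  have hEF := congr_arg (fun x : ℤ[ZMod g × ZMod v] => Matrix.circulant ⇑x.coeff)
    (ofFun_golayProduct_mul_invert_add (ofFun_mul_invert_add_of_isGolayPair_add_sub hab)
      hCD.ofFun_mul_invert_add)
  simp only [coeff_add, Finsupp.coe_add, Matrix.circulant_add, circulant_coeff_mul,
    circulant_coeff_invert, coe_coeff_ofFun, circulant_coeff_single_zero] at hEF
  have hNegC : ∀ j, (-C) j = 1 ∨ (-C) j = -1 := fun j => by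
    rcases hCD.1 j with h | h <;> simp [h]
  have hH := Matrix.isHadamard_fromBlocks_circulant
    (golayProduct_halves_eq_one_or_eq_neg_one hAB.1 hAB.2.1 hCD.1 hCD.2.1)
    (golayProduct_halves_eq_one_or_eq_neg_one hAB.1 hAB.2.1 hCD.2.1 hNegC) ?_
  · have hcard : Fintype.card (ZMod g × ZMod v ⊕ ZMod g × ZMod v) = 2 * g * v := by
      simp [Fintype.card_sum, ZMod.card]; ring
    exact ⟨_, hH.reindex (Fintype.equivFinOfCardEq hcard) (Fintype.equivFinOfCardEq hcard)⟩
  · rw [hEF, Fintype.card_prod, ZMod.card, ZMod.card]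
    congr 1
    push_cast
    ring

theorem hadamard_of_golay_and_periodic_golay (g v : ℕ) (hg : 0 < g) (hv : 0 < v)
    (hGolay : ∃ A B : ZMod g → ℤ,
      (∀ i, A i = 1 ∨ A i = -1) ∧ (∀ i, B i = 1 ∨ B i = -1) ∧
      ∀ s : ℤ, s ≠ 0 → naf g A s + naf g B s = 0)
    (hPeriodic : ∃ C D : ZMod v → ℤ,
      (∀ i, C i = 1 ∨ C i = -1) ∧ (∀ i, D i = 1 ∨ D i = -1) ∧
      ∀ s : ZMod v, s ≠ 0 → paf v C s + paf v D s = 0) :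
    ∃ H : Matrix (Fin (2 * g * v)) (Fin (2 * g * v)) ℤ,
      (∀ i j, H i j = 1 ∨ H i j = -1) ∧
      H * H.transpose
        = ((2 * g * v : ℤ)) • (1 : Matrix (Fin (2 * g * v)) (Fin (2 * g * v)) ℤ) := by
  obtain ⟨A, B, hAB⟩ := hGolay
  obtain ⟨C, D, hCD⟩ := hPeriodic
  have : NeZero g := ⟨hg.ne'⟩
  have : NeZero v := ⟨hv.ne'⟩
  obtain ⟨H, hH⟩ := exists_isHadamard_of_isGolayPair_of_isPeriodicGolayPair
    (show IsGolayPair g A B from hAB) (show IsPeriodicGolayPair v C D from hCD)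
  refine ⟨H, fun i j => Unitary.mem_iff_eq_one_or_eq_neg_one.mp (hH.apply_mem i j), ?_⟩
  simpa [Matrix.conjTranspose_eq_transpose_of_trivial] using hH.mul_conjTranspose
end
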